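/- In the one-factor baseline model, ATT(3,3) = E[ΔY_3 | G=3] − (θ_3* + F_3*·E[ΔY_2 | G=3]), where F_3* = (E[ΔY_3|G=∞] − E[ΔY_3|G=4])/(E[ΔY_2|G=∞] − E[ΔY_2|G=4]) and θ_3* = E[ΔY_3|G=4] − F_3*·E[ΔY_2|G=4], provided E[ΔY_2|G=∞] ≠ E[ΔY_2|G=4]. -/
import Mathlib

/- Baseline one-factor identification of ATT(3,3).  Group-conditional
   expectations are represented by real numbers satisfying the model
   restrictions implied by Y_t(0) = θ_t + η + λF_t + e_t with
   E[e_t | G = g] = 0 and no anticipation. -/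
theorem stmt_16
    (Δθ2 Δθ3 ΔF2 ΔF3 El3 El4 Eli : ℝ)    -- model parameters / loading means
    (EΔY2g3 EΔY3g3 EΔY2g4 EΔY3g4 EΔY2gi EΔY3gi ATT33 : ℝ)
    -- groups 4 and ∞ untreated in periods ≤ 3: observed = untreated
    (h24 : EΔY2g4 = Δθ2 + El4 * ΔF2)
    (h34 : EΔY3g4 = Δθ3 + El4 * ΔF3)
    (h2i : EΔY2gi = Δθ2 + Eli * ΔF2)
    (h3i : EΔY3gi = Δθ3 + Eli * ΔF3)
    -- no anticipation for group 3 in its pre-treatment periods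
    (h23 : EΔY2g3 = Δθ2 + El3 * ΔF2)
    -- ATT(3,3) = E[ΔY_3 | G=3] − E[ΔY_3(0) | G=3]
    (hATT : ATT33 = EΔY3g3 - (Δθ3 + El3 * ΔF3))
    -- rank conditions
    (hF : ΔF2 ≠ 0)
    (hl : El4 ≠ Eli) :
    EΔY2gi ≠ EΔY2g4 ∧
    ATT33 =
      EΔY3g3 -
        ((EΔY3g4 -
            ((EΔY3gi - EΔY3g4) / (EΔY2gi - EΔY2g4)) * EΔY2g4)
          + ((EΔY3gi - EΔY3g4) / (EΔY2gi - EΔY2g4)) * EΔY2g3) := by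
  have hd : EΔY2gi - EΔY2g4 = (Eli - El4) * ΔF2 := by rw [h2i, h24]; ring
  have hne : EΔY2gi - EΔY2g4 ≠ 0 := by
    rw [hd]
    exact mul_ne_zero (sub_ne_zero.mpr (Ne.symm hl)) hF
  refine ⟨sub_ne_zero.mp hne, ?_⟩
  have key : (EΔY3gi - EΔY3g4) / (EΔY2gi - EΔY2g4) = ΔF3 / ΔF2 := by
    rw [hd, h3i, h34]
    rw [show Δθ3 + Eli * ΔF3 - (Δθ3 + El4 * ΔF3) = (Eli - El4) * ΔF3 by ring]
    rw [mul_comm (Eli - El4) ΔF3, mul_comm (Eli - El4) ΔF2,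
      mul_div_mul_right _ _ (sub_ne_zero.mpr (Ne.symm hl))]
  rw [key, hATT, h34, h24, h23]
  field_simp
  ring
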